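/- Let G be the Gersten group, presented by generators a, b, s, t and relators ab = ba, s a s⁻¹ = a⁻¹b², t a t⁻¹ = b. Then G is free-by-ℤ: there exists a normal subgroup N of G isomorphic to a free group of finite rank such that G/N is isomorphic to ℤ. -/

import Mathlib

/-- Generators `a, b, s, t` of the Gersten group. -/
def a16 : FreeGroup (Fin 4) := FreeGroup.of 0
def b16 : FreeGroup (Fin 4) := FreeGroup.of 1
def s16 : FreeGroup (Fin 4) := FreeGroup.of 2
def t16 : FreeGroup (Fin 4) := FreeGroup.of 3

/-- Relators `ab = ba`, `s a s⁻¹ = a⁻¹b²`, `t a t⁻¹ = b` of the Gersten group. -/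
def relsGersten : Set (FreeGroup (Fin 4)) :=
  {a16 * b16 * (b16 * a16)⁻¹, s16 * a16 * s16⁻¹ * (a16⁻¹ * b16 ^ 2)⁻¹,
    t16 * a16 * t16⁻¹ * b16⁻¹}

/-!
Let `χ : G → ℤ` send `a, b ↦ 1` and `s, t ↦ 0`. Its kernel is free on `γ = ab⁻¹`, `σ = s`,
`τ = t`: in fact `G ≅ F(γ, σ, τ) ⋊ ⟨a⟩`, where conjugation by `a` (the monodromy) fixes `γ`
because `a` and `b` commute, sends `s ↦ γ²s` because `s a s⁻¹ = a⁻¹b²`, and `t ↦ γt` because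
`t a t⁻¹ = b`. The isomorphism and its inverse are written down on generators (`b ↦ γ⁻¹a`).
-/

theorem SemidirectProduct.exists_ker_mulEquiv_of_mulEquiv {G N Q : Type*} [Group G] [Group N]
    [Group Q] {φ : Q →* MulAut N} (e : G ≃* N ⋊[φ] Q) :
    ∃ K : Subgroup G, K.Normal ∧ Nonempty (K ≃* N) ∧
      ∃ χ : G →* Q, Function.Surjective χ ∧ χ.ker = K := by
  set χ : G →* Q := rightHom.comp e.toMonoidHom
  have hmap : χ.ker.map e.toMonoidHom = (inl : N →* N ⋊[φ] Q).range := by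
    rw [range_inl_eq_ker_rightHom, ← MonoidHom.comap_ker,
      Subgroup.map_comap_eq_self_of_surjective e.surjective]
  have hker : χ.ker ≃* N := (e.subgroupMap χ.ker).trans
    ((MulEquiv.subgroupCongr hmap).trans (MonoidHom.ofInjective inl_injective).symm)
  exact ⟨χ.ker, χ.normal_ker, ⟨hker⟩, χ, rightHom_surjective.comp e.surjective, rfl⟩

theorem MonoidHom.map_zpow_apply_of_map_apply_eq_conj {N G : Type*} [Group N] [Group G]
    (f : N →* G) {σ : MulAut N} {g : G} (h : ∀ x, f (σ x) = g * f x * g⁻¹) (n : ℤ) (x : N) :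
    f ((σ ^ n) x) = g ^ n * f x * (g ^ n)⁻¹ := by
  have h_inv (x : N) : f (σ⁻¹ x) = g⁻¹ * f x * g := by
    conv_rhs => rw [← MulAut.apply_inv_self _ σ x, h]
    group
  induction n using Int.induction_on generalizing x with
  | zero => simp
  | succ k ih => rw [zpow_add_one, MulAut.mul_apply, ih, h]; group
  | pred k ih => rw [zpow_sub_one, MulAut.mul_apply, ih, h_inv]; group

namespace Gersten

open SemidirectProduct Multiplicative

abbrev F := FreeGroup (Fin 3)

def γ : F := .of 0
def σ : F := .of 1
def τ : F := .of 2

def monodromy : MulAut F :=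
  MonoidHom.toMulEquiv (FreeGroup.lift ![γ, γ ^ 2 * σ, γ * τ])
    (FreeGroup.lift ![γ, γ⁻¹ ^ 2 * σ, γ⁻¹ * τ])
    (by ext i; fin_cases i <;> simp [γ, σ, τ])
    (by ext i; fin_cases i <;> simp [γ, σ, τ])

@[simp] lemma monodromy_γ : monodromy γ = γ := by simp [monodromy, γ]
@[simp] lemma monodromy_σ : monodromy σ = γ ^ 2 * σ := by simp [monodromy, γ, σ]
@[simp] lemma monodromy_τ : monodromy τ = γ * τ := by simp [monodromy, γ, τ]
@[simp] lemma monodromy_symm_γ : monodromy.symm γ = γ := by simp [monodromy, γ]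
@[simp] lemma monodromy_symm_σ : monodromy.symm σ = γ⁻¹ ^ 2 * σ := by simp [monodromy, γ, σ]
@[simp] lemma monodromy_symm_τ : monodromy.symm τ = γ⁻¹ * τ := by simp [monodromy, γ, τ]

abbrev H := F ⋊[zpowersHom _ monodromy] Multiplicative ℤ

abbrev G := PresentedGroup relsGersten

def a : G := .of 0
def b : G := .of 1
def s : G := .of 2
def t : G := .of 3

lemma a_mul_b : a * b = b * a :=
  PresentedGroup.mk_eq_mk_of_mul_inv_mem (x := a16 * b16) (y := b16 * a16) (.inl rfl)

lemma s_conj_a : s * a * s⁻¹ = a⁻¹ * b ^ 2 :=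
  PresentedGroup.mk_eq_mk_of_mul_inv_mem (x := s16 * a16 * s16⁻¹) (y := a16⁻¹ * b16 ^ 2)
    (.inr (.inl rfl))

lemma t_conj_a : t * a * t⁻¹ = b :=
  PresentedGroup.mk_eq_mk_of_mul_inv_mem (x := t16 * a16 * t16⁻¹) (y := b16) (.inr (.inr rfl))

lemma a_conj_ab_inv : a * (a * b⁻¹) * a⁻¹ = a * b⁻¹ := by
  have hab : Commute a b := a_mul_b
  rw [((Commute.refl a).mul_right hab.inv_right).eq, mul_inv_cancel_right]

lemma a_conj_s : a * s * a⁻¹ = (a * b⁻¹) ^ 2 * s := by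
  have hab : Commute a b := a_mul_b
  calc a * s * a⁻¹ = a * (s * a * s⁻¹)⁻¹ * s := by group
    _ = a * (b⁻¹ ^ 2 * a) * s := by rw [s_conj_a]; group
    _ = (a * b⁻¹) ^ 2 * s := by
      rw [← (hab.inv_right.pow_right 2).eq, hab.inv_right.mul_pow, sq a, mul_assoc a a]

lemma a_conj_t : a * t * a⁻¹ = a * b⁻¹ * t :=
  calc a * t * a⁻¹ = a * (t * a * t⁻¹)⁻¹ * t := by group
    _ = a * b⁻¹ * t := by rw [t_conj_a]

def toSemidirectGen : Fin 4 → H := ![inr (ofAdd 1), inl γ⁻¹ * inr (ofAdd 1), inl σ, inl τ]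

lemma lift_toSemidirectGen_eq_one :
    ∀ r ∈ relsGersten, FreeGroup.lift toSemidirectGen r = 1 := by
  simp only [relsGersten, Set.mem_insert_iff, Set.mem_singleton_iff, forall_eq_or_imp, forall_eq]
  refine ⟨?_, ?_, ?_⟩ <;>
    ext <;> simp [a16, b16, s16, t16, toSemidirectGen, sq, mul_assoc]

def toSemidirect : G →* H := PresentedGroup.toGroup lift_toSemidirectGen_eq_one

@[simp] lemma toSemidirect_a : toSemidirect a = inr (ofAdd 1) := PresentedGroup.toGroup.of _
@[simp] lemma toSemidirect_b : toSemidirect b = inl γ⁻¹ * inr (ofAdd 1) :=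
  PresentedGroup.toGroup.of _
@[simp] lemma toSemidirect_s : toSemidirect s = inl σ := PresentedGroup.toGroup.of _
@[simp] lemma toSemidirect_t : toSemidirect t = inl τ := PresentedGroup.toGroup.of _

def ofFree : F →* G := FreeGroup.lift ![a * b⁻¹, s, t]

@[simp] lemma ofFree_γ : ofFree γ = a * b⁻¹ := by simp [ofFree, γ]
@[simp] lemma ofFree_σ : ofFree σ = s := by simp [ofFree, σ]
@[simp] lemma ofFree_τ : ofFree τ = t := by simp [ofFree, τ]

lemma ofFree_monodromy (x : F) : ofFree (monodromy x) = a * ofFree x * a⁻¹ := by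
  suffices h : ofFree.comp monodromy.toMonoidHom = (MulAut.conj a).toMonoidHom.comp ofFree from
    DFunLike.congr_fun h x
  refine FreeGroup.ext_hom _ _ fun i => ?_
  fin_cases i
  · change ofFree (monodromy γ) = a * ofFree γ * a⁻¹
    simp [a_conj_ab_inv]
  · change ofFree (monodromy σ) = a * ofFree σ * a⁻¹
    simp [a_conj_s]
  · change ofFree (monodromy τ) = a * ofFree τ * a⁻¹
    simp [a_conj_t]

def ofSemidirect : H →* G :=
  lift ofFree (zpowersHom G a) fun n => by
    ext x
    exact ofFree.map_zpow_apply_of_map_apply_eq_conj ofFree_monodromy n.toAdd (.of x)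

@[simp] lemma ofSemidirect_inl (x : F) : ofSemidirect (inl x) = ofFree x := lift_inl ..
@[simp] lemma ofSemidirect_inr (n : Multiplicative ℤ) : ofSemidirect (inr n) = a ^ n.toAdd :=
  lift_inr ..

lemma ofSemidirect_comp_toSemidirect : ofSemidirect.comp toSemidirect = .id G := by
  refine PresentedGroup.ext fun i => ?_
  fin_cases i
  · exact (ofSemidirect_inr _).trans (zpow_one a)
  · change ofSemidirect (toSemidirect b) = b
    simp
  · exact ofSemidirect_inl σ
  · exact ofSemidirect_inl τ

lemma toSemidirect_comp_ofSemidirect : toSemidirect.comp ofSemidirect = .id H := by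
  refine hom_ext (FreeGroup.ext_hom _ _ fun i => ?_) (MonoidHom.ext_mint ?_)
  · fin_cases i
    · change toSemidirect (ofSemidirect (inl γ)) = inl γ
      ext <;> simp
    · exact congrArg toSemidirect (ofSemidirect_inl σ)
    · exact congrArg toSemidirect (ofSemidirect_inl τ)
  · change toSemidirect (ofSemidirect (inr (ofAdd 1))) = inr (ofAdd 1)
    simp

def equivSemidirect : G ≃* H :=
  toSemidirect.toMulEquiv ofSemidirect ofSemidirect_comp_toSemidirect toSemidirect_comp_ofSemidirect

end Gersten

/-- Example 5.2 / Theorem 2.1: the Gersten group is (finite rank free)-by-ℤ: it has a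
normal subgroup `N` isomorphic to a free group of finite rank with `G/N ≅ ℤ` (the latter
expressed by a surjective homomorphism onto ℤ whose kernel is exactly `N`). -/
theorem Gersten_free_by_Z :
    ∃ N : Subgroup (PresentedGroup relsGersten), N.Normal ∧
      (∃ n : ℕ, Nonempty (N ≃* FreeGroup (Fin n))) ∧
      ∃ χ : PresentedGroup relsGersten →* Multiplicative ℤ,
        Function.Surjective χ ∧ χ.ker = N := by
  obtain ⟨N, hN, ⟨e⟩, χ, hχ, hker⟩ :=
    SemidirectProduct.exists_ker_mulEquiv_of_mulEquiv Gersten.equivSemidirect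
  exact ⟨N, hN, ⟨3, ⟨e⟩⟩, χ, hχ, hker⟩
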